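/- For a uniform airgap, the mutual inductance between two stator phases equals L_ms = 2πlP₀(⟨AS(φ)AS(φ−2π/3)⟩ − ⟨AS⟩²) = −(2π/3)·l·P₀·N². -/

import Mathlib

open Real

/-- The trapezoidal stator turn function on the base period `[0, π)`. -/
noncomputable def ASbase (N φ : ℝ) : ℝ :=
  if φ < Real.pi / 6 then 12 * N / Real.pi * φ
  else if φ < Real.pi / 2 then 2 * N
  else if φ < 2 * Real.pi / 3 then 8 * N - 12 * N / Real.pi * φ
  else 0

/-- The π-periodic extension of the trapezoidal stator turn function. -/
noncomputable def AS (N φ : ℝ) : ℝ :=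
  ASbase N (φ - Real.pi * ⌊φ / Real.pi⌋)

open MeasureTheory intervalIntegral Set

lemma AS_eq (N φ : ℝ) (h1 : 0 ≤ φ) (h2 : φ < Real.pi) : AS N φ = ASbase N φ := by
  have h : ⌊φ / Real.pi⌋ = 0 := by
    rw [Int.floor_eq_zero_iff]
    constructor
    · exact div_nonneg h1 pi_pos.le
    · rw [div_lt_one pi_pos]; exact h2
  simp [AS, h]

lemma AS_eq_neg (N φ : ℝ) (h1 : -Real.pi ≤ φ) (h2 : φ < 0) :
    AS N φ = ASbase N (φ + Real.pi) := by
  have h : ⌊φ / Real.pi⌋ = -1 := by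
    rw [Int.floor_eq_iff]
    push_cast
    constructor
    · rw [neg_le, ← neg_div, div_le_one pi_pos]; linarith
    · rw [div_lt_iff₀ pi_pos]; linarith
  simp [AS, h]

lemma AS_pi (N : ℝ) : AS N Real.pi = 0 := by
  have : (Real.pi / Real.pi) = 1 := div_self pi_ne_zero
  simp [AS, this, ASbase, pi_pos, div_pos pi_pos (by norm_num : (0:ℝ) < 6)]

lemma piece (f : ℝ → ℝ) (c d a b : ℝ) (hab : a ≤ b)
    (h : ∀ x ∈ Set.Icc a b, f x = c * x + d) :
    IntervalIntegrable f volume a b ∧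
    ∫ x in a..b, f x = c * (b ^ 2 - a ^ 2) / 2 + d * (b - a) := by
  have hg : Continuous fun x : ℝ => c * x + d := by continuity
  have heq : Set.EqOn f (fun x => c * x + d) (Set.uIcc a b) := by
    rw [Set.uIcc_of_le hab]; exact h
  have hae : (fun x => c * x + d) =ᵐ[volume.restrict (Set.uIoc a b)] f := by
    filter_upwards [MeasureTheory.ae_restrict_mem measurableSet_uIoc] with x hx
    exact (heq (Set.uIoc_subset_uIcc hx)).symm
  refine ⟨(hg.intervalIntegrable a b).congr (fun x hx => (heq (Set.uIoc_subset_uIcc hx)).symm), ?_⟩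
  rw [intervalIntegral.integral_congr heq]
  have hint : IntervalIntegrable (fun x : ℝ => c * x) volume a b :=
    ((continuous_const.mul continuous_id : Continuous fun x : ℝ => c * x)).intervalIntegrable a b
  rw [intervalIntegral.integral_add hint intervalIntegrable_const,
      intervalIntegral.integral_const_mul, integral_id, intervalIntegral.integral_const,
      smul_eq_mul]
  ring

set_option maxHeartbeats 1000000 in
/-- Uniform-airgap mutual inductance between two stator phases:
`L_ms = 2πlP₀(⟨AS(φ)AS(φ−2π/3)⟩ − ⟨AS⟩²) = −(2π/3)·l·P₀·N²`. -/
theorem stator_mutual_inductance (l P₀ N : ℝ) (hl : 0 < l) (hP : 0 < P₀) (hN : 0 < N) :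
    2 * Real.pi * l * P₀ *
        ((1 / Real.pi) * (∫ φ in (0:ℝ)..Real.pi, AS N φ * AS N (φ - 2 * Real.pi / 3)) -
          ((1 / Real.pi) * ∫ φ in (0:ℝ)..Real.pi, AS N φ) ^ 2) =
      -(2 * Real.pi / 3) * l * P₀ * N ^ 2 := by
  have hp := pi_pos
  have hp' := pi_ne_zero
  -- pointwise descriptions of AS N x
  have hA1 : ∀ x ∈ Set.Icc (0:ℝ) (Real.pi/6), AS N x = 12*N/Real.pi * x := by
    intro x hx
    rw [AS_eq N x hx.1 (by linarith [hx.2])]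
    unfold ASbase
    split_ifs with h1 h2 h3
    · rfl
    · have hxe : x = Real.pi/6 := le_antisymm hx.2 (not_lt.mp h1)
      rw [hxe]; field_simp; ring
    · linarith [hx.2]
    · linarith [hx.2]
  have hA2 : ∀ x ∈ Set.Icc (Real.pi/6) (Real.pi/2), AS N x = 2*N := by
    intro x hx
    rw [AS_eq N x (by linarith [hx.1]) (by linarith [hx.2])]
    unfold ASbase
    split_ifs with h1 h2 h3
    · linarith [hx.1]
    · rfl
    · have hxe : x = Real.pi/2 := le_antisymm hx.2 (not_lt.mp h2)
      rw [hxe]; field_simp; ring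
    · linarith [hx.2]
  have hA3 : ∀ x ∈ Set.Icc (Real.pi/2) (2*Real.pi/3), AS N x = 8*N - 12*N/Real.pi * x := by
    intro x hx
    rw [AS_eq N x (by linarith [hx.1]) (by linarith [hx.2])]
    unfold ASbase
    split_ifs with h1 h2 h3
    · linarith [hx.1]
    · linarith [hx.1]
    · rfl
    · have hxe : x = 2*Real.pi/3 := le_antisymm hx.2 (not_lt.mp h3)
      rw [hxe]; field_simp; ring
  have hA4 : ∀ x ∈ Set.Icc (2*Real.pi/3) Real.pi, AS N x = 0 := by
    intro x hx
    rcases lt_or_eq_of_le hx.2 with h | h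
    · rw [AS_eq N x (by linarith [hx.1]) h]
      unfold ASbase
      split_ifs with h1 h2 h3
      · linarith [hx.1]
      · linarith [hx.1]
      · linarith [hx.1]
      · rfl
    · rw [h, AS_pi]
  -- pointwise descriptions of AS N (x - 2π/3)
  have hB1 : ∀ x ∈ Set.Icc (0:ℝ) (Real.pi/6), AS N (x - 2*Real.pi/3) = 2*N := by
    intro x hx
    rw [AS_eq_neg N _ (by linarith [hx.1]) (by linarith [hx.2])]
    have harg : x - 2*Real.pi/3 + Real.pi = x + Real.pi/3 := by ring
    rw [harg]
    unfold ASbase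
    split_ifs with h1 h2 h3
    · linarith [hx.1]
    · rfl
    · have hxe : x = Real.pi/6 := by linarith [hx.2, not_lt.mp h2]
      rw [hxe]; field_simp; ring
    · linarith [hx.2]
  have hB2 : ∀ x ∈ Set.Icc (Real.pi/6) (Real.pi/3),
      AS N (x - 2*Real.pi/3) = 4*N - 12*N/Real.pi * x := by
    intro x hx
    rw [AS_eq_neg N _ (by linarith [hx.1]) (by linarith [hx.2])]
    have harg : x - 2*Real.pi/3 + Real.pi = x + Real.pi/3 := by ring
    rw [harg]
    unfold ASbase
    split_ifs with h1 h2 h3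
    · linarith [hx.1]
    · linarith [hx.1]
    · field_simp; ring
    · have hxe : x = Real.pi/3 := by linarith [hx.2, not_lt.mp h3]
      rw [hxe]; field_simp; ring
  have hB3 : ∀ x ∈ Set.Icc (Real.pi/3) (2*Real.pi/3), AS N (x - 2*Real.pi/3) = 0 := by
    intro x hx
    rcases lt_or_eq_of_le hx.2 with h | h
    · rw [AS_eq_neg N _ (by linarith [hx.1]) (by linarith)]
      have harg : x - 2*Real.pi/3 + Real.pi = x + Real.pi/3 := by ring
      rw [harg]
      unfold ASbase
      split_ifs with h1 h2 h3
      · linarith [hx.1]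
      · linarith [hx.1]
      · linarith [hx.1]
      · rfl
    · have harg : x - 2*Real.pi/3 = 0 := by rw [h]; ring
      rw [harg, AS_eq N 0 le_rfl hp]
      unfold ASbase
      rw [if_pos (by positivity)]
      ring
  -- the four pieces of ∫ AS
  obtain ⟨i1, e1⟩ := piece (fun φ => AS N φ) (12*N/Real.pi) 0 0 (Real.pi/6) (by linarith)
    (fun x hx => by rw [hA1 x hx]; ring)
  obtain ⟨i2, e2⟩ := piece (fun φ => AS N φ) 0 (2*N) (Real.pi/6) (Real.pi/2) (by linarith)
    (fun x hx => by rw [hA2 x hx]; ring)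
  obtain ⟨i3, e3⟩ := piece (fun φ => AS N φ) (-(12*N/Real.pi)) (8*N) (Real.pi/2) (2*Real.pi/3)
    (by linarith) (fun x hx => by rw [hA3 x hx]; ring)
  obtain ⟨i4, e4⟩ := piece (fun φ => AS N φ) 0 0 (2*Real.pi/3) Real.pi (by linarith)
    (fun x hx => by rw [hA4 x hx]; ring)
  -- the three pieces of ∫ AS·AS(shifted)
  obtain ⟨j1, f1⟩ := piece (fun φ => AS N φ * AS N (φ - 2*Real.pi/3)) (24*N^2/Real.pi) 0
    0 (Real.pi/6) (by linarith)
    (fun x hx => by rw [hA1 x hx, hB1 x hx]; field_simp; ring)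
  obtain ⟨j2, f2⟩ := piece (fun φ => AS N φ * AS N (φ - 2*Real.pi/3)) (-(24*N^2/Real.pi)) (8*N^2)
    (Real.pi/6) (Real.pi/3) (by linarith)
    (fun x hx => by
      rw [hA2 x ⟨hx.1, by linarith [hx.2]⟩, hB2 x hx]; field_simp; ring)
  obtain ⟨j3, f3⟩ := piece (fun φ => AS N φ * AS N (φ - 2*Real.pi/3)) 0 0
    (Real.pi/3) Real.pi (by linarith)
    (fun x hx => by
      rcases le_or_gt x (2*Real.pi/3) with h | h
      · rw [hB3 x ⟨hx.1, h⟩]; ring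
      · rw [hA4 x ⟨h.le, hx.2⟩]; ring)
  -- assemble ∫₀^π AS
  have E1 : ∫ φ in (0:ℝ)..Real.pi, AS N φ = Real.pi * N := by
    have s1 := intervalIntegral.integral_add_adjacent_intervals i3 i4
    have s2 := intervalIntegral.integral_add_adjacent_intervals i2 (i3.trans i4)
    have s3 := intervalIntegral.integral_add_adjacent_intervals i1 (i2.trans (i3.trans i4))
    rw [← s3, ← s2, ← s1, e1, e2, e3, e4]
    field_simp
    ring
  have E2 : ∫ φ in (0:ℝ)..Real.pi, AS N φ * AS N (φ - 2*Real.pi/3) = 2*Real.pi*N^2/3 := by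
    have s1 := intervalIntegral.integral_add_adjacent_intervals j2 j3
    have s2 := intervalIntegral.integral_add_adjacent_intervals j1 (j2.trans j3)
    rw [← s2, ← s1, f1, f2, f3]
    field_simp
    ring
  rw [show (2:ℝ) * Real.pi / 3 = 2*Real.pi/3 from rfl] at E2 ⊢
  rw [E2, E1]
  field_simp
  ring
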